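/- Let n1,n2,n3,α0,α1,α2,α3 ∈ ℂ with each n_i ≠ 0 and 2n1n2n3−(n1+n2)n3−2(n1+n2) = 0. Let U ⊆ ℂ be open with 0 ∉ U and δ(t) ≠ 0 for t ∈ U, and let x, y : ℂ → ℂ be differentiable on U with x(t) ≠ 1 for t ∈ U, satisfying the generalized Painlevé V system with parameters (n1,n2,n3; α0,α1,α2,α3) on U. Then the functions x̃(t) := x(−t)/(x(−t)−1) and ỹ(t) := −(x(−t)−1)·((x(−t)−1)·y(−t)+α2) satisfy the generalized Painlevé V system on the set {t : −t ∈ U} with parameters (n2,n1,n3; α1,α0,α2,α3), provided the quantity δ(t) formed from these new parameters is nonzero on that set. -/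

import Mathlib

/-- The function `δ(t)` of the generalized Painlevé V system. -/
noncomputable def pvDelta (n1 n2 b0 b1 b2 b3 : ℂ) (t : ℂ) : ℂ :=
  t * (2 * n2 * b0 + 2 * n1 * b1 - 2 * (n1 + n2) * b2
    + 2 * (2 * n1 * n2 - n1 - n2) * b3 - (n1 - n2) * t)

/-- `x, y : ℂ → ℂ` are differentiable on `U` and satisfy the generalized
Painlevé V system with parameters `(n1,n2,n3; b0,b1,b2,b3)` on `U`. -/
def PVSystem (n1 n2 n3 b0 b1 b2 b3 : ℂ) (U : Set ℂ) (x y : ℂ → ℂ) : Prop :=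
  DifferentiableOn ℂ x U ∧ DifferentiableOn ℂ y U ∧
  ∀ t ∈ U,
    (pvDelta n1 n2 b0 b1 b2 b3 t * deriv x t =
      2 * n1 * n2 * (x t) ^ 3 * y t - 2 * n1 * n2 * (x t) ^ 2 * y t
      - 2 * n1 * (b1 - n2 * b2) * (x t) ^ 2
      + (2 * n2 * b0 + 2 * n1 * b1 - 2 * n1 * n2 * b2 + (n1 + n2) * t) * x t
      - (n1 + n2) * t)
    ∧
    (pvDelta n1 n2 b0 b1 b2 b3 t * deriv y t =
      -(2 * n1) * (2 * n2 - 1) * (x t) ^ 2 * (y t) ^ 2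
      + 2 * (2 * n1 * n2 - n1 - n2) * x t * (y t) ^ 2
      + 2 * n1 * (2 * b1 - (3 * n2 - 2) * b2) * x t * y t
      - (2 * n2 * b0 + 2 * n1 * b1 - 2 * (2 * n1 * n2 - n1 - n2) * b2 + (n1 + n2) * t) * y t
      + 2 * n1 * b2 * (b1 + b2 - n2 * b2))

/-! Write the system as `δ(t)·(x', y') = F(t, x, y)`. The map
`π : (x, y) ↦ (x/(x-1), -(x-1)((x-1)y + α2))` has a Jacobian carrying `F` with parameters
`(n1,n2; α0,α1,α2)` at time `-t` exactly to `F` with parameters `(n2,n1; α1,α0,α2)` at time `t`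
(a rational identity). The sign produced by the time reversal `t ↦ -t` is absorbed by `δ`,
which changes sign under the same exchange of parameters, so the chain rule finishes the proof. -/

def pvFieldX (n1 n2 b0 b1 b2 t X Y : ℂ) : ℂ :=
  2 * n1 * n2 * X ^ 3 * Y - 2 * n1 * n2 * X ^ 2 * Y
    - 2 * n1 * (b1 - n2 * b2) * X ^ 2
    + (2 * n2 * b0 + 2 * n1 * b1 - 2 * n1 * n2 * b2 + (n1 + n2) * t) * X
    - (n1 + n2) * t

def pvFieldY (n1 n2 b0 b1 b2 t X Y : ℂ) : ℂ :=
  -(2 * n1) * (2 * n2 - 1) * X ^ 2 * Y ^ 2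
    + 2 * (2 * n1 * n2 - n1 - n2) * X * Y ^ 2
    + 2 * n1 * (2 * b1 - (3 * n2 - 2) * b2) * X * Y
    - (2 * n2 * b0 + 2 * n1 * b1 - 2 * (2 * n1 * n2 - n1 - n2) * b2 + (n1 + n2) * t) * Y
    + 2 * n1 * b2 * (b1 + b2 - n2 * b2)

theorem pvSystem_iff (n1 n2 n3 b0 b1 b2 b3 : ℂ) (U : Set ℂ) (x y : ℂ → ℂ) :
    PVSystem n1 n2 n3 b0 b1 b2 b3 U x y ↔
      DifferentiableOn ℂ x U ∧ DifferentiableOn ℂ y U ∧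
      ∀ t ∈ U,
        pvDelta n1 n2 b0 b1 b2 b3 t * deriv x t = pvFieldX n1 n2 b0 b1 b2 t (x t) (y t) ∧
        pvDelta n1 n2 b0 b1 b2 b3 t * deriv y t = pvFieldY n1 n2 b0 b1 b2 t (x t) (y t) :=
  Iff.rfl

theorem pvDelta_swap (n1 n2 b0 b1 b2 b3 t : ℂ) :
    pvDelta n2 n1 b1 b0 b2 b3 t = -pvDelta n1 n2 b0 b1 b2 b3 (-t) := by
  simp only [pvDelta]
  ring

section Pi

variable {n1 n2 b0 b1 b2 t X : ℂ} (Y : ℂ)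

theorem pvFieldX_pi (hX : X ≠ 1) :
    pvFieldX n2 n1 b1 b0 b2 t (X / (X - 1)) (-(X - 1) * ((X - 1) * Y + b2)) =
      -pvFieldX n1 n2 b0 b1 b2 (-t) X Y / (X - 1) ^ 2 := by
  have hX1 : X - 1 ≠ 0 := sub_ne_zero.2 hX
  simp only [pvFieldX]
  field_simp
  ring

theorem pvFieldY_pi (hX : X ≠ 1) :
    pvFieldY n2 n1 b1 b0 b2 t (X / (X - 1)) (-(X - 1) * ((X - 1) * Y + b2)) =
      -(2 * (X - 1) * pvFieldX n1 n2 b0 b1 b2 (-t) X Y * Y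
        + (X - 1) ^ 2 * pvFieldY n1 n2 b0 b1 b2 (-t) X Y
        + b2 * pvFieldX n1 n2 b0 b1 b2 (-t) X Y) := by
  have hX1 : X - 1 ≠ 0 := sub_ne_zero.2 hX
  simp only [pvFieldX, pvFieldY]
  field_simp
  ring

end Pi

section Derivatives

variable {𝕜 : Type*} [NontriviallyNormedField 𝕜] {x y : 𝕜 → 𝕜} {x' y' t : 𝕜}

theorem HasDerivAt.comp_neg (hx : HasDerivAt x x' (-t)) :
    HasDerivAt (fun s => x (-s)) (-x') t := by
  have := hx.comp t (hasDerivAt_neg t)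
  rwa [mul_neg_one] at this

theorem hasDerivAt_pi_fst (hx : HasDerivAt x x' (-t)) (h1 : x (-t) ≠ 1) :
    HasDerivAt (fun s => x (-s) / (x (-s) - 1)) (x' / (x (-t) - 1) ^ 2) t := by
  have hx1 : x (-t) - 1 ≠ 0 := sub_ne_zero.2 h1
  refine (hx.comp_neg.div (hx.comp_neg.sub_const 1) hx1).congr_deriv ?_
  ring

theorem hasDerivAt_pi_snd (c : 𝕜) (hx : HasDerivAt x x' (-t)) (hy : HasDerivAt y y' (-t)) :
    HasDerivAt (fun s => -(x (-s) - 1) * ((x (-s) - 1) * y (-s) + c))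
      (2 * (x (-t) - 1) * x' * y (-t) + (x (-t) - 1) ^ 2 * y' + c * x') t := by
  refine ((hx.comp_neg.sub_const 1).neg.mul
    (((hx.comp_neg.sub_const 1).mul hy.comp_neg).add_const c)).congr_deriv ?_
  simp only [Pi.mul_apply, Pi.neg_apply]
  ring

end Derivatives

theorem pv_symmetry_pi_general (n1 n2 n3 a0 a1 a2 a3 : ℂ)
    (U : Set ℂ) (hU : IsOpen U)
    (x y : ℂ → ℂ) (hx : ∀ t ∈ U, x t ≠ 1)
    (hxy : PVSystem n1 n2 n3 a0 a1 a2 a3 U x y) :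
    PVSystem n2 n1 n3 a1 a0 a2 a3 {t : ℂ | -t ∈ U}
      (fun t => x (-t) / (x (-t) - 1))
      (fun t => -(x (-t) - 1) * ((x (-t) - 1) * y (-t) + a2)) := by
  obtain ⟨hdx, hdy, hsys⟩ := (pvSystem_iff ..).1 hxy
  have hasDeriv {f : ℂ → ℂ} (hf : DifferentiableOn ℂ f U) {t : ℂ} (ht : -t ∈ U) :
      HasDerivAt f (deriv f (-t)) (-t) :=
    (hf.differentiableAt (hU.mem_nhds ht)).hasDerivAt
  have hX {t : ℂ} (ht : -t ∈ U) := hasDerivAt_pi_fst (hasDeriv hdx ht) (hx _ ht)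
  have hY {t : ℂ} (ht : -t ∈ U) := hasDerivAt_pi_snd a2 (hasDeriv hdx ht) (hasDeriv hdy ht)
  refine (pvSystem_iff ..).2 ⟨fun t ht => (hX ht).differentiableAt.differentiableWithinAt,
    fun t ht => (hY ht).differentiableAt.differentiableWithinAt, fun t ht => ?_⟩
  obtain ⟨hx', hy'⟩ := hsys (-t) ht
  rw [(hX ht).deriv, (hY ht).deriv, pvDelta_swap, pvFieldX_pi _ (hx _ ht),
    pvFieldY_pi _ (hx _ ht), ← hx', ← hy']
  constructor <;> ring

/-- Birational symmetry `π` of the generalized Painlevé V system: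
`x̃(t) = x(−t)/(x(−t)−1)`, `ỹ(t) = −(x(−t)−1)·((x(−t)−1)·y(−t)+α2)`,
with parameters `(n2,n1,n3; α1,α0,α2,α3)`. -/
theorem pv_symmetry_pi (n1 n2 n3 a0 a1 a2 a3 : ℂ)
    (hn1 : n1 ≠ 0) (hn2 : n2 ≠ 0) (hn3 : n3 ≠ 0)
    (hrel : 2 * n1 * n2 * n3 - (n1 + n2) * n3 - 2 * (n1 + n2) = 0)
    (U : Set ℂ) (hU : IsOpen U) (h0U : (0 : ℂ) ∉ U)
    (hδ : ∀ t ∈ U, pvDelta n1 n2 a0 a1 a2 a3 t ≠ 0)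
    (x y : ℂ → ℂ) (hx : ∀ t ∈ U, x t ≠ 1)
    (hxy : PVSystem n1 n2 n3 a0 a1 a2 a3 U x y)
    (hδ' : ∀ t ∈ ({t : ℂ | -t ∈ U} : Set ℂ), pvDelta n2 n1 a1 a0 a2 a3 t ≠ 0) :
    PVSystem n2 n1 n3 a1 a0 a2 a3 {t : ℂ | -t ∈ U}
      (fun t => x (-t) / (x (-t) - 1))
      (fun t => -(x (-t) - 1) * ((x (-t) - 1) * y (-t) + a2)) :=
  pv_symmetry_pi_general n1 n2 n3 a0 a1 a2 a3 U hU x y hx hxy
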